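/- arXiv:2602.04647 — 8 statements merged into one kernel-verified Lean document; each statement's English description precedes it below -/
import Mathlib

section
/- Let G be a topological group that is a κ-Fréchet–Urysohn space. Then for every sequence (U_n) of open subsets of G such that the identity e lies in the closure of each U_n, there exist a strictly increasing sequence (n_k) of natural numbers and a sequence (x_k) in G such that x_k ∈ U_{n_k} for every k and x_k → e. -/
/-!
If `closure {1}` is a neighbourhood of `1`, pick `x n ∈ U n ∩ closure {1}`; every such sequence
converges to `1`. Otherwise the κ-Fréchet–Urysohn property gives `s n → 1` with
`s n ∉ closure {1}`, and regularity gives open `V n ∋ 1` with `s n ∉ closure (V n)`.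
Put `A n = V n ∩ U n`. The points `(s n)⁻¹ → 1` lie in the closure of the open set
`Ω = ⋃ n, (s n)⁻¹ A n`, so some `y k ∈ Ω` converge to `1`, say `s (m k) * y k ∈ A (m k)`.
These points converge to `1`, and `m k → ∞` because a value `j` taken infinitely often would put
`s j` in `closure (A j)`. Passing to a subsequence makes `m` strictly increasing.
-/

open Filter Topology

def KappaFrechetUrysohn (X : Type*) [TopologicalSpace X] : Prop :=
  ∀ U : Set X, IsOpen U → ∀ x ∈ closure U,
    ∃ u : ℕ → X, (∀ n, u n ∈ U) ∧ Tendsto u atTop (𝓝 x)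

open Set

section Separation

variable {X : Type*} [TopologicalSpace X]

theorem tendsto_nhds_of_forall_mem_closure_singleton [R0Space X] {ι : Type*} {l : Filter ι}
    {x : ι → X} {a : X} (h : ∀ i, x i ∈ closure {a}) : Tendsto x l (𝓝 a) :=
  tendsto_nhds.2 fun _ hV ha =>
    univ_mem' fun i => (specializes_iff_mem_closure.2 (h i)).symm.mem_open hV ha

theorem exists_forall_mem_tendsto_of_closure_singleton_mem_nhds [R0Space X]
    {ι : Type*} {l : Filter ι} {U : ι → Set X} {a : X} (ha : closure {a} ∈ 𝓝 a)
    (hU : ∀ i, a ∈ closure (U i)) : ∃ x : ι → X, (∀ i, x i ∈ U i) ∧ Tendsto x l (𝓝 a) := by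
  choose x hxa hxU using fun i => mem_closure_iff_nhds.1 (hU i) _ ha
  exact ⟨x, hxU, tendsto_nhds_of_forall_mem_closure_singleton hxa⟩

theorem exists_isOpen_mem_notMem_closure [R1Space X] {a b : X} (h : b ∉ closure {a}) :
    ∃ V, IsOpen V ∧ a ∈ V ∧ b ∉ closure V := by
  have hab : Disjoint (𝓝 a) (𝓝 b) :=
    disjoint_nhds_nhds_iff_not_specializes.2 (mt specializes_iff_mem_closure.1 h)
  obtain ⟨V, ⟨haV, hV⟩, W, ⟨hbW, hW⟩, hVW⟩ :=
    ((nhds_basis_opens a).disjoint_iff (nhds_basis_opens b)).1 hab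
  refine ⟨V, hV, haV, fun hb => ?_⟩
  obtain ⟨z, hzW, hzV⟩ := mem_closure_iff.1 hb W hW hbW
  exact hVW.ne_of_mem hzV hzW rfl

theorem KappaFrechetUrysohn.exists_tendsto_notMem_closure_singleton
    (hX : KappaFrechetUrysohn X) {a : X} (ha : closure {a} ∉ 𝓝 a) :
    ∃ s : ℕ → X, (∀ n, s n ∉ closure {a}) ∧ Tendsto s atTop (𝓝 a) :=
  hX _ isClosed_closure.isOpen_compl a <| by
    rwa [closure_compl, mem_compl_iff, mem_interior_iff_mem_nhds]

end Separation

theorem KappaFrechetUrysohn.exists_tendsto_atTop_mem_of_notMem_closure {G : Type*} [Group G]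
    [TopologicalSpace G] [IsTopologicalGroup G] (hG : KappaFrechetUrysohn G) {s : ℕ → G}
    (hs : Tendsto s atTop (𝓝 1)) {A : ℕ → Set G} (hA : ∀ n, IsOpen (A n))
    (h1A : ∀ n, (1 : G) ∈ closure (A n)) (hsA : ∀ n, s n ∉ closure (A n)) :
    ∃ (m : ℕ → ℕ) (x : ℕ → G), Tendsto m atTop atTop ∧ (∀ k, x k ∈ A (m k)) ∧
      Tendsto x atTop (𝓝 1) := by
  set Ω := ⋃ n, (s n * ·) ⁻¹' A n
  have hΩ : IsOpen Ω := isOpen_iUnion fun n => (hA n).preimage (continuous_const_mul _)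
  have hsΩ : ∀ n, (s n)⁻¹ ∈ closure Ω := fun n => by
    simpa using map_mem_closure (continuous_const_mul (s n)⁻¹) (h1A n)
      fun z hz => mem_iUnion.2 ⟨n, by simpa using hz⟩
  have h1Ω : (1 : G) ∈ closure Ω :=
    isClosed_closure.mem_of_tendsto (by simpa using hs.inv) (univ_mem' hsΩ)
  obtain ⟨y, hyΩ, hy⟩ := hG Ω hΩ 1 h1Ω
  choose m hm using fun k => mem_iUnion.1 (hyΩ k)
  have hm_ne : ∀ j, ∀ᶠ k in atTop, m k ≠ j := fun j => by
    by_contra hj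
    have hfreq : ∃ᶠ k in atTop, s j * y k ∈ A j :=
      (not_eventually.1 hj).mono fun k hk => by simpa [not_not.1 hk] using hm k
    exact hsA j <|
      mem_closure_of_frequently_of_tendsto hfreq (by simpa using tendsto_const_nhds.mul hy)
  have hm_top : Tendsto m atTop cofinite := le_cofinite_iff_eventually_ne.2 hm_ne
  rw [Nat.cofinite_eq_atTop] at hm_top
  exact ⟨m, fun k => s (m k) * y k, hm_top, hm, by simpa using (hs.comp hm_top).mul hy⟩

theorem stmt0 {G : Type*} [Group G] [TopologicalSpace G] [IsTopologicalGroup G]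
    (hkFU : KappaFrechetUrysohn G)
    (U : ℕ → Set G) (hopen : ∀ n, IsOpen (U n)) (hcl : ∀ n, (1 : G) ∈ closure (U n)) :
    ∃ (nk : ℕ → ℕ) (x : ℕ → G), StrictMono nk ∧ (∀ k, x k ∈ U (nk k)) ∧
      Tendsto x atTop (𝓝 1) := by
  obtain ⟨m, x, hm, hxU, hx⟩ : ∃ (m : ℕ → ℕ) (x : ℕ → G), Tendsto m atTop atTop ∧
      (∀ k, x k ∈ U (m k)) ∧ Tendsto x atTop (𝓝 1) := by
    by_cases h1 : closure {(1 : G)} ∈ 𝓝 1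
    · obtain ⟨x, hxU, hx⟩ := exists_forall_mem_tendsto_of_closure_singleton_mem_nhds h1 hcl
      exact ⟨id, x, tendsto_id, hxU, hx⟩
    · obtain ⟨s, hs1, hs⟩ := hkFU.exists_tendsto_notMem_closure_singleton h1
      choose V hV h1V hsV using fun n => exists_isOpen_mem_notMem_closure (hs1 n)
      obtain ⟨m, x, hm, hxA, hx⟩ := hkFU.exists_tendsto_atTop_mem_of_notMem_closure hs
        (fun n => (hV n).inter (hopen n)) (fun n => (hV n).inter_closure ⟨h1V n, hcl n⟩)
        (fun n hn => hsV n (closure_mono inter_subset_left hn))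
      exact ⟨m, x, hm, fun k => (hxA k).2, hx⟩
  obtain ⟨φ, hφ, hmφ⟩ := strictMono_subseq_of_tendsto_atTop hm
  exact ⟨m ∘ φ, x ∘ φ, hmφ, fun k => hxU (φ k), hx.comp hφ.tendsto_atTop⟩
end

section
/- Let G be a κ-Fréchet–Urysohn topological group and let {V_n : n ∈ ω}, where V_n = {V_n^i : i ∈ ω}, be countable families of open subsets of G such that each family V_n weakly converges to the identity e. Then there exist strictly increasing sequences (i_k) and (n_k) in ω and a sequence (x_k) such that x_k → e and x_k ∈ V_{n_k}^{i_k} for every k. -/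
open Filter Topology

/-- A family `{A n}_{n∈ω}` of subsets of `X` weakly converges to `x` if for every
neighborhood `W` of `x` there are a sequence `(a n)` with `a n ∈ A n` and an `m`
such that `a n ∈ W` for every `n > m`. -/
def WeaklyConverges {X : Type*} [TopologicalSpace X] (A : ℕ → Set X) (x : X) : Prop :=
  ∀ W ∈ 𝓝 x, ∃ (a : ℕ → X) (m : ℕ), (∀ n, a n ∈ A n) ∧ ∀ n > m, a n ∈ W

/-!
Put `B m = ⋃_{n, i ≥ m} V n i`: these sets are open, decreasing, and `1 ∈ closure (B m)`; it
suffices to find `b m ∈ B m` with `b m → 1`. A sequence converging to `x` inside a union of open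
pieces `P k`, none of which has `x` in its closure, must visit pieces of unbounded index, so it is
enough to find such pieces with `P k` inside `B k`, or inside a translate of it by some `u → 1`. Let `K = ⋂ m, closure (B m)`.
If `K` is not a neighbourhood of `1`, take `u j → 1` outside `K` and use the pieces
`u j⁻¹ • B m` with `u j ∉ closure (B m)`; translating back by `u j` lands in `B m`.
If `K` is a neighbourhood of `1`, either every `B m` contains a point specializing to `1`, or a
sequence in some `B m` converging to `1` yields closed neighbourhoods `F k` of `1` whose
intersection is not a neighbourhood, and the pieces `B k ∩ interior K \ F k` work.
-/

open Set Pointwise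

theorem WeaklyConverges.mem_closure_iUnion_ge {X : Type*} [TopologicalSpace X] {A : ℕ → Set X}
    {x : X} (hA : WeaklyConverges A x) (m : ℕ) : x ∈ closure (⋃ i ≥ m, A i) := by
  refine mem_closure_iff_nhds.2 fun W hW => ?_
  obtain ⟨a, m', haA, haW⟩ := hA W hW
  exact ⟨a (max m (m' + 1)), haW _ (by omega), mem_iUnion₂.2 ⟨_, le_max_left _ _, haA _⟩⟩

namespace KappaFrechetUrysohn

section Space

variable {X : Type*} [TopologicalSpace X] (hX : KappaFrechetUrysohn X) {x : X}
include hX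

theorem exists_tendsto_of_mem_closure_iUnion {P : ℕ → Set X} (hPo : ∀ k, IsOpen (P k))
    (hPx : ∀ k, x ∉ closure (P k)) (hx : x ∈ closure (⋃ k, P k)) :
    ∃ (b : ℕ → X) (κ : ℕ → ℕ), Tendsto κ atTop atTop ∧ Tendsto b atTop (𝓝 x) ∧
      ∀ t, b t ∈ P (κ t) := by
  obtain ⟨b, hbP, hb⟩ := hX _ (isOpen_iUnion hPo) x hx
  choose κ hκ using fun t => mem_iUnion.1 (hbP t)
  refine ⟨b, κ, tendsto_atTop.2 fun m => ?_, hb, hκ⟩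
  have hnhds : ⋂ k < m, (closure (P k))ᶜ ∈ 𝓝 x :=
    (biInter_mem (finite_Iio m)).2 fun k _ => isClosed_closure.compl_mem_nhds (hPx k)
  filter_upwards [hb hnhds] with t ht
  exact not_lt.1 fun hlt => mem_iInter₂.1 ht _ hlt (subset_closure (hκ t))

theorem exists_closed_nhds_iInter_notMem_nhds [RegularSpace X] {U : Set X} (hU : IsOpen U)
    (hx : x ∈ closure U) (hUx : ∀ z ∈ U, ¬z ⤳ x) :
    ∃ F : ℕ → Set X, (∀ k, F k ∈ 𝓝 x) ∧ (∀ k, IsClosed (F k)) ∧ ⋂ k, F k ∉ 𝓝 x := by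
  obtain ⟨y, hyU, hy⟩ := hX U hU x hx
  have hsep : ∀ j, ∃ F ∈ 𝓝 x, IsClosed F ∧ y j ∉ F := fun j => by
    obtain ⟨W, hW, hyW⟩ : ∃ W ∈ 𝓝 x, y j ∉ W := by
      simpa [specializes_iff_pure, Filter.le_def] using hUx _ (hyU j)
    obtain ⟨F, ⟨hF, hFc⟩, hFW⟩ := (closed_nhds_basis x).mem_iff.1 hW
    exact ⟨F, hF, hFc, fun h => hyW (hFW h)⟩
  choose F hF hFc hyF using hsep
  refine ⟨F, hF, hFc, fun hI => ?_⟩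
  obtain ⟨j, hj⟩ := (hy.eventually_mem hI).exists
  exact hyF j (mem_iInter.1 hj j)

theorem exists_tendsto_of_iInter_closure_mem_nhds {B : ℕ → Set X} (hBo : ∀ m, IsOpen (B m))
    (hK : ⋂ m, closure (B m) ∈ 𝓝 x) {F : ℕ → Set X} (hF : ∀ k, F k ∈ 𝓝 x)
    (hFc : ∀ k, IsClosed (F k)) (hFx : ⋂ k, F k ∉ 𝓝 x) :
    ∃ (b : ℕ → X) (κ : ℕ → ℕ), Tendsto κ atTop atTop ∧ Tendsto b atTop (𝓝 x) ∧
      ∀ t, b t ∈ B (κ t) := by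
  set W := interior (⋂ m, closure (B m))
  have hQx : ∀ k, x ∉ closure ((B k ∩ W) \ F k) := fun k hk =>
    (mem_closure_iff_nhds.1 hk _ (hF k)).elim fun _ h => h.2.2 h.1
  have hx : x ∈ closure (⋃ k, (B k ∩ W) \ F k) := by
    refine mem_closure_iff.2 fun O hO hxO => ?_
    obtain ⟨w, ⟨hwO, hwW⟩, hwF⟩ := not_subset.1 fun h : O ∩ W ⊆ ⋂ k, F k =>
      hFx (mem_of_superset (inter_mem (hO.mem_nhds hxO) (interior_mem_nhds.2 hK)) h)
    obtain ⟨k, hwk⟩ := not_forall.1 (mt mem_iInter.2 hwF)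
    have hwB : w ∈ closure (B k) := mem_iInter.1 (interior_subset hwW) k
    obtain ⟨y, ⟨⟨hyO, hyW⟩, hyF⟩, hyB⟩ := mem_closure_iff.1 hwB _
      ((hO.inter isOpen_interior).sdiff (hFc k)) ⟨⟨hwO, hwW⟩, hwk⟩
    exact ⟨y, hyO, mem_iUnion.2 ⟨k, ⟨hyB, hyW⟩, hyF⟩⟩
  obtain ⟨b, κ, hκ, hb, hbQ⟩ := hX.exists_tendsto_of_mem_closure_iUnion
    (fun k => ((hBo k).inter isOpen_interior).sdiff (hFc k)) hQx hx
  exact ⟨b, κ, hκ, hb, fun t => (hbQ t).1.1⟩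

end Space

section Group

variable {G : Type*} [Group G] [TopologicalSpace G] [IsTopologicalGroup G]
  (hG : KappaFrechetUrysohn G) {B : ℕ → Set G}
include hG

theorem exists_tendsto_one_of_iInter_closure_notMem_nhds (hBo : ∀ m, IsOpen (B m))
    (hBa : Antitone B) (hB1 : ∀ m, (1 : G) ∈ closure (B m)) (hK : ⋂ m, closure (B m) ∉ 𝓝 1) :
    ∃ (b : ℕ → G) (κ : ℕ → ℕ), Tendsto κ atTop atTop ∧ Tendsto b atTop (𝓝 1) ∧
      ∀ t, b t ∈ B (κ t) := by
  have hKc : (1 : G) ∈ closure (⋂ m, closure (B m))ᶜ := by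
    rwa [closure_compl, mem_compl_iff, mem_interior_iff_mem_nhds]
  obtain ⟨u, huK, hu⟩ := hG _ (isClosed_iInter fun _ => isClosed_closure).isOpen_compl 1 hKc
  choose h hh using fun j => not_forall.1 (mt mem_iInter.2 (huK j))
  set m : ℕ → ℕ := fun j => max (h j) j
  have hPx : ∀ j, (1 : G) ∉ closure ((u j)⁻¹ • B (m j)) := fun j hj => by
    rw [closure_smul, mem_smul_set_iff_inv_smul_mem, inv_inv, smul_eq_mul, mul_one] at hj
    exact hh j (closure_mono (hBa (le_max_left _ _)) hj)
  have hx : (1 : G) ∈ closure (⋃ j, (u j)⁻¹ • B (m j)) := by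
    refine mem_closure_iff_nhds.2 fun O hO => ?_
    obtain ⟨A, hA, hAO⟩ := exists_nhds_one_split hO
    have hu' : Tendsto (fun j => (u j)⁻¹) atTop (𝓝 1) := by simpa using hu.inv
    obtain ⟨j, hjA⟩ := (hu'.eventually_mem hA).exists
    obtain ⟨z, hzA, hzB⟩ := mem_closure_iff_nhds.1 (hB1 (m j)) A hA
    exact ⟨_, hAO _ hjA _ hzA, mem_iUnion.2 ⟨j, smul_mem_smul_set hzB⟩⟩
  obtain ⟨c, κ, hκ, hc, hcP⟩ := hG.exists_tendsto_of_mem_closure_iUnion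
    (fun j => (hBo (m j)).smul _) hPx hx
  refine ⟨fun t => u (κ t) * c t, fun t => m (κ t),
    tendsto_atTop_mono (fun t => le_max_right _ _) hκ, by simpa using (hu.comp hκ).mul hc,
    fun t => ?_⟩
  simpa [mem_smul_set_iff_inv_smul_mem] using hcP t

theorem exists_tendsto_one_forall_mem (hBo : ∀ m, IsOpen (B m)) (hBa : Antitone B)
    (hB1 : ∀ m, (1 : G) ∈ closure (B m)) :
    ∃ b : ℕ → G, Tendsto b atTop (𝓝 1) ∧ ∀ m, b m ∈ B m := by
  suffices ∃ (b : ℕ → G) (κ : ℕ → ℕ), Tendsto κ atTop atTop ∧ Tendsto b atTop (𝓝 1) ∧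
      ∀ t, b t ∈ B (κ t) by
    obtain ⟨b, κ, hκ, hb, hbB⟩ := this
    obtain ⟨φ, hφ, hκφ⟩ := extraction_forall_of_eventually fun m => hκ.eventually_ge_atTop m
    exact ⟨b ∘ φ, hb.comp hφ.tendsto_atTop, fun m => hBa (hκφ m) (hbB _)⟩
  by_cases hK : ⋂ m, closure (B m) ∈ 𝓝 1
  · by_cases hspec : ∀ m, ∃ z ∈ B m, z ⤳ 1
    · choose z hzB hz using hspec
      exact ⟨z, id, tendsto_id, fun s hs => mem_map.2 <| univ_mem' fun m => (hz m).pure_le_nhds hs, hzB⟩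
    · obtain ⟨M, hM⟩ := not_forall.1 hspec
      obtain ⟨F, hF, hFc, hFx⟩ := hG.exists_closed_nhds_iInter_notMem_nhds (hBo M) (hB1 M)
        fun z hz hz1 => hM ⟨z, hz, hz1⟩
      exact hG.exists_tendsto_of_iInter_closure_mem_nhds hBo hK hF hFc hFx
  · exact hG.exists_tendsto_one_of_iInter_closure_notMem_nhds hBo hBa hB1 hK

end Group

end KappaFrechetUrysohn

theorem stmt2 {G : Type*} [Group G] [TopologicalSpace G] [IsTopologicalGroup G]
    (hkFU : KappaFrechetUrysohn G)
    (V : ℕ → ℕ → Set G) (hopen : ∀ n i, IsOpen (V n i))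
    (hw : ∀ n, WeaklyConverges (fun i => V n i) (1 : G)) :
    ∃ (ik nk : ℕ → ℕ) (x : ℕ → G), StrictMono ik ∧ StrictMono nk ∧
      Tendsto x atTop (𝓝 1) ∧ ∀ k, x k ∈ V (nk k) (ik k) := by
  set B : ℕ → Set G := fun m => ⋃ n ≥ m, ⋃ i ≥ m, V n i
  have hBo : ∀ m, IsOpen (B m) := fun m =>
    isOpen_biUnion fun n _ => isOpen_biUnion fun i _ => hopen n i
  have hBa : Antitone B := fun m m' hmm' =>
    biUnion_mono (fun n hn => le_trans hmm' hn) fun n _ =>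
      biUnion_mono (fun i hi => le_trans hmm' hi) fun _ _ => subset_rfl
  have hB1 : ∀ m, (1 : G) ∈ closure (B m) := fun m =>
    closure_mono (subset_biUnion_of_mem (u := fun n => ⋃ i ≥ m, V n i) le_rfl)
      ((hw m).mem_closure_iUnion_ge m)
  obtain ⟨b, hb, hbB⟩ := hkFU.exists_tendsto_one_forall_mem hBo hBa hB1
  choose n hn i hi hbV using fun t => by simpa only [B, mem_iUnion₂] using hbB t
  obtain ⟨φ, hφ, hnφ⟩ := strictMono_subseq_of_id_le hn
  obtain ⟨ψ, hψ, hiψ⟩ := strictMono_subseq_of_id_le (u := i ∘ φ) fun t => (hφ.id_le t).trans (hi _)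
  exact ⟨i ∘ φ ∘ ψ, n ∘ φ ∘ ψ, b ∘ φ ∘ ψ, hiψ, hnφ.comp hψ, hb.comp (hφ.comp hψ).tendsto_atTop,
    fun k => hbV _⟩
end

section
/- Every hemicompact κ-Fréchet–Urysohn topological group is locally compact. -/
open Filter Topology

/-- A space is hemicompact if there is an increasing sequence of compact sets
such that every compact subset is contained in one of them. -/
def Hemicompact (X : Type*) [TopologicalSpace X] : Prop :=
  ∃ K : ℕ → Set X, (∀ n, IsCompact (K n)) ∧ Monotone K ∧
    ∀ S : Set X, IsCompact S → ∃ n, S ⊆ K n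

/-!
If some member of a hemicompact exhaustion `K` has nonempty interior, a translate of it is a
compact neighbourhood of `1`, so the group is locally compact. Otherwise every `K k` is closed
and nowhere dense. With `x ∈ K m`, κ-Fréchet–Urysohn applied to the dense open set `(K m)ᶜ`
gives a sequence `s k → x` with `s k ≠ x`; separate `s k` from `x` by
disjoint open sets `V k ∋ s k`, `W k ∋ x`. The open set `U = ⋃ k, (K k)ᶜ ∩ V k` accumulates at
`x`, so some sequence `y` in `U` converges to `x`. The compact set `{x} ∪ range y` lies in some
`K M`; eventually `y j` lies in `W 0 ∩ ⋯ ∩ W M`, so the index `k` with `y j ∈ (K k)ᶜ ∩ V k`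
exceeds `M`, contradicting `y j ∈ K M ⊆ K k`.
-/

section

open Set

variable {X : Type*} [TopologicalSpace X]

theorem mem_closure_iUnion_inter_of_tendsto {D V : ℕ → Set X} {s : ℕ → X} {x : X}
    (hD : ∀ k, Dense (D k)) (hV : ∀ k, IsOpen (V k)) (hsV : ∀ k, s k ∈ V k)
    (hs : Tendsto s atTop (𝓝 x)) : x ∈ closure (⋃ k, D k ∩ V k) := by
  rw [mem_closure_iff]
  intro O hO hxO
  obtain ⟨k, hk⟩ := (hs.eventually_mem (hO.mem_nhds hxO)).exists
  obtain ⟨z, ⟨hzO, hzV⟩, hzD⟩ := (hD k).inter_open_nonempty _ (hO.inter (hV k)) ⟨s k, hk, hsV k⟩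
  exact ⟨z, hzO, mem_iUnion.mpr ⟨k, hzD, hzV⟩⟩

namespace KappaFrechetUrysohn

theorem exists_seq_notMem_tendsto (hX : KappaFrechetUrysohn X) {K : Set X} (hKc : IsClosed K)
    (hK : interior K = ∅) (x : X) : ∃ s : ℕ → X, (∀ n, s n ∉ K) ∧ Tendsto s atTop (𝓝 x) :=
  hX Kᶜ hKc.isOpen_compl x <|
    (interior_eq_empty_iff_dense_compl.mp hK).closure_eq ▸ mem_univ x

theorem exists_interior_nonempty [T2Space X] [Nonempty X] (hX : KappaFrechetUrysohn X)
    {K : ℕ → Set X} (hKc : ∀ n, IsCompact (K n)) (hK : Monotone K)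
    (hKabs : ∀ S : Set X, IsCompact S → ∃ n, S ⊆ K n) : ∃ n, (interior (K n)).Nonempty := by
  by_contra! hint
  obtain ⟨x⟩ := ‹Nonempty X›
  obtain ⟨m, hm⟩ := hKabs {x} isCompact_singleton
  obtain ⟨s, hsK, hs⟩ := hX.exists_seq_notMem_tendsto (hKc m).isClosed (hint m) x
  have hsx : ∀ k, s k ≠ x := fun k h => hsK k (h ▸ hm rfl)
  choose V W hVo hWo hsV hxW hVW using fun k => t2_separation (hsx k)
  obtain ⟨y, hyU, hy⟩ := hX _ (isOpen_iUnion fun k => (hKc k).isClosed.isOpen_compl.inter (hVo k))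
    x (mem_closure_iUnion_inter_of_tendsto
      (fun k => interior_eq_empty_iff_dense_compl.mp (hint k)) hVo hsV hs)
  obtain ⟨M, hM⟩ := hKabs _ hy.isCompact_insert_range
  have hyW : ∀ᶠ j in atTop, ∀ k ∈ Iic M, y j ∈ W k :=
    (finite_Iic M).eventually_all.mpr fun k _ => hy.eventually_mem ((hWo k).mem_nhds (hxW k))
  obtain ⟨j, hj⟩ := hyW.exists
  obtain ⟨k, hyK, hyV⟩ := mem_iUnion.mp (hyU j)
  have hMk : M < k := lt_of_not_ge fun hkM => (hVW k).notMem_of_mem_left hyV (hj k hkM)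
  exact hyK (hK hMk.le (hM (mem_insert_of_mem _ ⟨j, rfl⟩)))

end KappaFrechetUrysohn

end

theorem stmt3 {G : Type*} [Group G] [TopologicalSpace G] [IsTopologicalGroup G] [T2Space G]
    (hhemi : Hemicompact G) (hkFU : KappaFrechetUrysohn G) :
    LocallyCompactSpace G := by
  obtain ⟨K, hKc, hKmono, hKabs⟩ := hhemi
  obtain ⟨n, x, hx⟩ := hkFU.exists_interior_nonempty hKc hKmono hKabs
  exact (hKc n).locallyCompactSpace_of_mem_nhds_of_group (mem_interior_iff_mem_nhds.mp hx)
end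

section
/- A hemicompact topological group is Baire if and only if it is locally compact. -/
theorem Hemicompact.sigmaCompactSpace {X : Type*} [TopologicalSpace X] (h : Hemicompact X) :
    SigmaCompactSpace X := by
  obtain ⟨K, hK, -, hcover⟩ := h
  refine ⟨⟨K, hK, Set.eq_univ_of_forall fun x ↦ ?_⟩⟩
  obtain ⟨n, hn⟩ := hcover {x} isCompact_singleton
  exact Set.mem_iUnion.2 ⟨n, hn rfl⟩

theorem IsTopologicalGroup.locallyCompactSpace_of_baireSpace {G : Type*} [Group G]
    [TopologicalSpace G] [IsTopologicalGroup G] [SigmaCompactSpace G] [BaireSpace G] :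
    LocallyCompactSpace G := by
  -- Closures are needed as `G` need not be Hausdorff; they stay compact since groups are R₁.
  have hcover : ⋃ n, closure (compactCovering G n) = Set.univ :=
    Set.eq_univ_of_subset (Set.iUnion_mono fun _ ↦ subset_closure) (iUnion_compactCovering G)
  obtain ⟨n, x, hx⟩ := nonempty_interior_of_iUnion_of_closed (fun _ ↦ isClosed_closure) hcover
  exact (isCompact_compactCovering G n).closure.locallyCompactSpace_of_mem_nhds_of_group
    (mem_interior_iff_mem_nhds.1 hx)

theorem stmt4_general {G : Type*} [Group G] [TopologicalSpace G] [IsTopologicalGroup G]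
    (hhemi : Hemicompact G) :
    BaireSpace G ↔ LocallyCompactSpace G := by
  have := hhemi.sigmaCompactSpace
  exact ⟨fun _ ↦ IsTopologicalGroup.locallyCompactSpace_of_baireSpace, fun _ ↦ inferInstance⟩

theorem stmt4 {G : Type*} [Group G] [TopologicalSpace G] [IsTopologicalGroup G] [T2Space G]
    (hhemi : Hemicompact G) :
    BaireSpace G ↔ LocallyCompactSpace G :=
  stmt4_general hhemi
end

section
/- Let E be a topological vector space (over ℝ), F a closed subspace of E that is metrizable in the subspace topology, and suppose the quotient space E/F is κ-Fréchet–Urysohn. Then E is κ-Fréchet–Urysohn. -/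
open Filter Topology

/-!
The argument works for a closed first countable subgroup `H` of a commutative topological group
`E`. After a translation the point is `0`. As `H` is first countable, there are open neighbourhoods
`Q k` of `0` in `E` with `Q (k + 1) - Q (k + 1) ⊆ Q k` whose traces on `H` form a basis at `0`
in `H`. If `U` meets every trace `Q k ∩ H`, a choice from these traces tends to `0`. Otherwise,
after shrinking, `U` misses `H`, so `0` lies in the closure of each image `Λ k` of `U ∩ Q k` in
`E ⧸ H` but not in `Λ 0`. Applying the κ-Fréchet–Urysohn property of `E ⧸ H` twice (to `Λ 0`,
then to a union of translates `s k + Λ (k + 1)` cut down near `s k`) yields points `a j ∈ Λ (κ j)`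
tending to `0` with `κ j → ∞`. Their lifts `e j ∈ U ∩ Q (κ j)` tend to `0`: modulo `H`, `e j` is
a small `w ∈ Q (m + 1)`, and then `e j - w` is a small element of `H` because it lies in `Q m`.
-/

open Pointwise

theorem kappaFrechetUrysohn_of_forall_zero_mem_closure {G : Type*} [AddGroup G]
    [TopologicalSpace G] [IsTopologicalAddGroup G]
    (h : ∀ U : Set G, IsOpen U → (0 : G) ∈ closure U →
      ∃ u : ℕ → G, (∀ n, u n ∈ U) ∧ Tendsto u atTop (𝓝 0)) :
    KappaFrechetUrysohn G := by
  intro U hU x hx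
  obtain ⟨u, huU, hu⟩ := h ((x + ·) ⁻¹' U) (hU.preimage (continuous_const_add x))
    (by
      change 0 ∈ closure (Homeomorph.addLeft x ⁻¹' U)
      rw [← (Homeomorph.addLeft x).preimage_closure]; simpa using hx)
  exact ⟨(x + u ·), huU, by simpa using hu.const_add x⟩

theorem KappaFrechetUrysohn.exists_diagonal_seq {X : Type*} [AddGroup X] [TopologicalSpace X]
    [IsTopologicalAddGroup X] [T2Space X] (hX : KappaFrechetUrysohn X) {Λ : ℕ → Set X}
    (hΛ : ∀ k, IsOpen (Λ k)) (hcl : ∀ k, (0 : X) ∈ closure (Λ k)) (h0 : (0 : X) ∉ Λ 0) :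
    ∃ κ : ℕ → ℕ, ∃ a : ℕ → X, (∀ j, a j ∈ Λ (κ j)) ∧ Tendsto κ atTop atTop ∧
      Tendsto a atTop (𝓝 0) := by
  obtain ⟨s, hsΛ, hs⟩ := hX (Λ 0) (hΛ 0) 0 (hcl 0)
  have hs0 : ∀ k, s k ≠ 0 := fun k hk => h0 (hk ▸ hsΛ k)
  choose A B hAo hBo hsA hB0 hAB using fun k => t2_separation (hs0 k)
  -- `Θ k` accumulates at `s k` but stays away from `0`
  set Θ : ℕ → Set X := fun k => A k ∩ (s k +ᵥ Λ (k + 1))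
  have hsΘ : ∀ k, s k ∈ closure (Θ k) := fun k =>
    (hAo k).inter_closure ⟨hsA k, by
      rw [closure_vadd]; exact ⟨0, hcl (k + 1), add_zero _⟩⟩
  obtain ⟨z, hzΘ, hz⟩ := hX (⋃ k, Θ k)
    (isOpen_iUnion fun k => (hAo k).inter ((hΛ _).vadd _)) 0
    (isClosed_closure.mem_of_tendsto hs (Eventually.of_forall fun k =>
      closure_mono (Set.subset_iUnion Θ k) (hsΘ k)))
  choose κ hκ using fun j => Set.mem_iUnion.1 (hzΘ j)
  have hκ_ne : ∀ k, ∀ᶠ j in atTop, κ j ≠ k := fun k =>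
    (hz.eventually ((hBo k).mem_nhds (hB0 k))).mono fun j hj hjk =>
      Set.disjoint_left.1 (hAB k) (hjk ▸ (hκ j).1) hj
  have hκ_top : Tendsto κ atTop atTop := by
    have : Tendsto κ atTop cofinite := le_cofinite_iff_eventually_ne.2 hκ_ne
    rwa [Nat.cofinite_eq_atTop] at this
  refine ⟨fun j => κ j + 1, fun j => -s (κ j) + z j, fun j => ?_,
    (tendsto_add_atTop_nat 1).comp hκ_top, by simpa using ((hs.comp hκ_top).neg).add hz⟩
  obtain ⟨a, ha, hza⟩ := (hκ j).2
  show -s (κ j) + z j ∈ Λ (κ j + 1)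
  simpa only [← hza, vadd_eq_add, neg_add_cancel_left] using ha

structure IsHalvingChain {E : Type*} [AddGroup E] [TopologicalSpace E] (Q : ℕ → Set E) :
    Prop where
  isOpen : ∀ k, IsOpen (Q k)
  zero_mem : ∀ k, (0 : E) ∈ Q k
  sub_mem : ∀ k, ∀ a ∈ Q (k + 1), ∀ b ∈ Q (k + 1), a - b ∈ Q k

namespace IsHalvingChain

variable {E : Type*} [AddGroup E] [TopologicalSpace E] {Q : ℕ → Set E}

theorem mem_nhds (hQ : IsHalvingChain Q) (k : ℕ) : Q k ∈ 𝓝 (0 : E) :=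
  (hQ.isOpen k).mem_nhds (hQ.zero_mem k)

theorem antitone (hQ : IsHalvingChain Q) : Antitone Q :=
  antitone_nat_of_succ_le fun k a ha => by
    simpa using hQ.sub_mem k a ha 0 (hQ.zero_mem (k + 1))

end IsHalvingChain

theorem exists_isHalvingChain_subset {E : Type*} [AddGroup E] [TopologicalSpace E]
    [IsTopologicalAddGroup E] (G : ℕ → Set E) (hG : ∀ k, G k ∈ 𝓝 (0 : E)) :
    ∃ Q : ℕ → Set E, IsHalvingChain Q ∧ ∀ k, Q k ⊆ G k := by
  have half : ∀ s : Set E, ∃ V : Set E, s ∈ 𝓝 (0 : E) →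
      IsOpen V ∧ (0 : E) ∈ V ∧ ∀ a ∈ V, ∀ b ∈ V, a - b ∈ s := by
    intro s
    by_cases hs : s ∈ 𝓝 (0 : E)
    · obtain ⟨V, hV, hVs⟩ := exists_nhds_half_neg hs
      exact ⟨interior V, fun _ => ⟨isOpen_interior, mem_interior_iff_mem_nhds.2 hV,
        fun a ha b hb => hVs a (interior_subset ha) b (interior_subset hb)⟩⟩
    · exact ⟨∅, fun h => absurd h hs⟩
  -- a total choice function, so that the chain can be defined by plain recursion
  choose half hhalf using half
  let Q : ℕ → Set E := fun n => Nat.rec (half (G 0)) (fun k Qk => half (Qk ∩ G (k + 1))) n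
  have hQ : ∀ k, IsOpen (Q k) ∧ (0 : E) ∈ Q k ∧ ∀ a ∈ Q k, ∀ b ∈ Q k, a - b ∈ G k := by
    intro k
    induction k with
    | zero => exact hhalf _ (hG 0)
    | succ k ih =>
      obtain ⟨hopen, hzero, hsub⟩ := hhalf _ (inter_mem (ih.1.mem_nhds ih.2.1) (hG (k + 1)))
      exact ⟨hopen, hzero, fun a ha b hb => (hsub a ha b hb).2⟩
  refine ⟨Q, ⟨fun k => (hQ k).1, fun k => (hQ k).2.1, fun k => ?_⟩, fun k a ha => ?_⟩
  · obtain ⟨-, -, hsub⟩ := hhalf _ (inter_mem ((hQ k).1.mem_nhds (hQ k).2.1) (hG (k + 1)))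
    exact fun a ha b hb => (hsub a ha b hb).1
  · simpa using (hQ k).2.2 a ha 0 (hQ k).2.1

theorem exists_isHalvingChain_hasAntitoneBasis {E : Type*} [AddGroup E] [TopologicalSpace E]
    [IsTopologicalAddGroup E] (H : Set E) [(𝓝[H] (0 : E)).IsCountablyGenerated] :
    ∃ Q : ℕ → Set E, IsHalvingChain Q ∧ (𝓝[H] (0 : E)).HasAntitoneBasis fun k => Q k ∩ H := by
  obtain ⟨t, ht⟩ := (𝓝[H] (0 : E)).exists_antitone_basis
  choose G hG hGt using fun k => mem_nhdsWithin_iff_exists_mem_nhds_inter.1 (ht.mem k)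
  obtain ⟨Q, hQ, hQG⟩ := exists_isHalvingChain_subset G hG
  refine ⟨Q, hQ, ⟨ht.1.to_hasBasis' ?_ ?_, fun k l hkl => Set.inter_subset_inter_left H
    (hQ.antitone hkl)⟩⟩
  · exact fun k _ => ⟨k, trivial, fun x hx => hGt k ⟨hQG k hx.1, hx.2⟩⟩
  · exact fun k _ => inter_mem (mem_nhdsWithin_of_mem_nhds (hQ.mem_nhds k)) self_mem_nhdsWithin

namespace IsHalvingChain

variable {E : Type*} [AddCommGroup E] [TopologicalSpace E] [IsTopologicalAddGroup E]
  {Q : ℕ → Set E} {H : AddSubgroup E}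

theorem tendsto_of_tendsto_mk (hQ : IsHalvingChain Q)
    (hQH : (𝓝[(H : Set E)] (0 : E)).HasAntitoneBasis fun k => Q k ∩ H)
    {ι : Type*} {l : Filter ι} {e : ι → E} (he : ∀ k, ∀ᶠ i in l, e i ∈ Q k)
    (hmk : Tendsto (fun i => (e i : E ⧸ H)) l (𝓝 0)) : Tendsto e l (𝓝 0) := by
  intro W hW
  rw [mem_map]
  obtain ⟨V, hV, hVW⟩ := exists_nhds_zero_half hW
  obtain ⟨m, -, hm⟩ := hQH.1.mem_iff.1 (mem_nhdsWithin_of_mem_nhds hV)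
  have hN : ((↑) '' (V ∩ Q (m + 1)) : Set (E ⧸ H)) ∈ 𝓝 0 :=
    QuotientAddGroup.isOpenMap_coe.image_mem_nhds (inter_mem hV (hQ.mem_nhds _))
  filter_upwards [hmk hN, he (m + 1)] with i ⟨w, ⟨hwV, hwQ⟩, hw⟩ hei
  have hH : e i - w ∈ H := by
    rw [← neg_add_eq_sub]; exact QuotientAddGroup.eq.1 hw
  simpa using hVW w hwV _ (hm ⟨hQ.sub_mem m _ hei _ hwQ, hH⟩)

theorem exists_seq_tendsto_of_disjoint [IsClosed (H : Set E)] (hQ : IsHalvingChain Q)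
    (hQH : (𝓝[(H : Set E)] (0 : E)).HasAntitoneBasis fun k => Q k ∩ H)
    (hq : KappaFrechetUrysohn (E ⧸ H)) {U : Set E} (hU : IsOpen U) (h0 : (0 : E) ∈ closure U)
    (hUH : Disjoint U H) : ∃ e : ℕ → E, (∀ n, e n ∈ U) ∧ Tendsto e atTop (𝓝 0) := by
  set Λ : ℕ → Set (E ⧸ H) := fun k => (↑) '' (Q k ∩ U)
  have hcl : ∀ k, (0 : E ⧸ H) ∈ closure (Λ k) := fun k =>
    image_closure_subset_closure_image continuous_quot_mk
      ⟨0, (hQ.isOpen k).inter_closure ⟨hQ.zero_mem k, h0⟩, rfl⟩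
  have h0Λ : (0 : E ⧸ H) ∉ Λ 0 := by
    rintro ⟨u, ⟨-, hu⟩, hu0⟩
    exact Set.disjoint_left.1 hUH hu ((QuotientAddGroup.eq_zero_iff u).1 hu0)
  obtain ⟨κ, a, ha, hκ, ha0⟩ := hq.exists_diagonal_seq
    (fun k => QuotientAddGroup.isOpenMap_coe _ ((hQ.isOpen k).inter hU)) hcl h0Λ
  choose e he hea using ha
  refine ⟨e, fun j => (he j).2, hQ.tendsto_of_tendsto_mk hQH (fun k => ?_) (by simpa [hea] using ha0)⟩
  filter_upwards [hκ.eventually_ge_atTop k] with j hj using hQ.antitone hj (he j).1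

end IsHalvingChain

theorem kappaFrechetUrysohn_of_quotient {E : Type*} [AddCommGroup E] [TopologicalSpace E]
    [IsTopologicalAddGroup E] (H : AddSubgroup E) [IsClosed (H : Set E)]
    [FirstCountableTopology H] (hq : KappaFrechetUrysohn (E ⧸ H)) : KappaFrechetUrysohn E := by
  have : (𝓝[(H : Set E)] (0 : E)).IsCountablyGenerated := by
    rw [nhdsWithin_eq_map_subtype_coe H.zero_mem]; infer_instance
  obtain ⟨Q, hQ, hQH⟩ := exists_isHalvingChain_hasAntitoneBasis (H : Set E)
  refine kappaFrechetUrysohn_of_forall_zero_mem_closure fun U hU h0 => ?_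
  by_cases hmeet : ∀ k, (Q k ∩ U ∩ H).Nonempty
  · choose c hc using hmeet
    exact ⟨c, fun k => (hc k).1.2,
      tendsto_nhds_of_tendsto_nhdsWithin (hQH.tendsto fun k => ⟨(hc k).1.1, (hc k).2⟩)⟩
  · push Not at hmeet
    obtain ⟨k, hk⟩ := hmeet
    obtain ⟨e, he, he0⟩ := hQ.exists_seq_tendsto_of_disjoint hQH hq ((hQ.isOpen k).inter hU)
      ((hQ.isOpen k).inter_closure ⟨hQ.zero_mem k, h0⟩) (Set.disjoint_iff_inter_eq_empty.2 hk)
    exact ⟨e, fun n => (he n).2, he0⟩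

theorem stmt8_general {E : Type*} [AddCommGroup E] [Module ℝ E] [TopologicalSpace E]
    [IsTopologicalAddGroup E]
    (F : Submodule ℝ E) (hFclosed : IsClosed (F : Set E))
    [TopologicalSpace.MetrizableSpace F]
    (hquot : KappaFrechetUrysohn (E ⧸ F)) :
    KappaFrechetUrysohn E :=
  kappaFrechetUrysohn_of_quotient F.toAddSubgroup hquot

theorem stmt8 {E : Type*} [AddCommGroup E] [Module ℝ E] [TopologicalSpace E]
    [IsTopologicalAddGroup E] [ContinuousSMul ℝ E]
    (F : Submodule ℝ E) (hFclosed : IsClosed (F : Set E))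
    [TopologicalSpace.MetrizableSpace F]
    (hquot : KappaFrechetUrysohn (E ⧸ F)) :
    KappaFrechetUrysohn E :=
  stmt8_general F hFclosed hquot
end

section
/- If E is a κ-Fréchet–Urysohn topological vector space and F is a metrizable topological vector space, then the product E × F is a κ-Fréchet–Urysohn space. -/
open Filter Topology

/-! Let `U ⊆ E × F` be open, `(x, y) ∈ closure U`, and let `V j` be a decreasing countable base at
`y`. The slices `A j = {e | ∃ f ∈ V j, (x + e, f) ∈ U}` are decreasing open sets accumulating at `0`,
and it suffices to find `a m → 0` with `a m ∈ A (n m)` and `n m → ∞`. When `0 ∉ A j`, take sequences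
`u j` in `A j` tending to `0` and apply the κ-Fréchet–Urysohn property once, to the open set
`⋃ j, u 0 j + (A j ∩ t j)`, where `t j` is a closed neighbourhood of `0` with `u 0 j + t j ⊆ A 0`.
It accumulates at `0` through `u 0 j + u j k`, while no finite part of the union accumulates at `0`,
so a sequence in it tending to `0` must visit pieces of unbounded index. -/

theorem tendsto_atTop_of_mem_of_notMem_closure {ι X : Type*} [TopologicalSpace X]
    {l : Filter ι} {S : ℕ → Set X} {x : X} {s : ι → X} {n : ι → ℕ}
    (hs : Tendsto s l (𝓝 x)) (hsn : ∀ i, s i ∈ S (n i)) (hx : ∀ j, x ∉ closure (S j)) :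
    Tendsto n l atTop := by
  refine tendsto_atTop.2 fun J => ?_
  have hfar : ∀ᶠ i in l, ∀ j ∈ Finset.range J, s i ∉ closure (S j) :=
    (eventually_all_finset _).2 fun j _ =>
      hs.eventually (isClosed_closure.isOpen_compl.mem_nhds (hx j))
  filter_upwards [hfar] with i hi
  by_contra! hlt
  exact hi (n i) (Finset.mem_range.2 hlt) (subset_closure (hsn i))

namespace KappaFrechetUrysohn

variable {E : Type*} [AddCommGroup E] [TopologicalSpace E] [IsTopologicalAddGroup E]

theorem exists_tendsto_zero_mem_of_zero_notMem (hE : KappaFrechetUrysohn E)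
    {A : ℕ → Set E} (hopen : ∀ j, IsOpen (A j)) (hcl : ∀ j, (0 : E) ∈ closure (A j))
    (h0 : ∀ j, (0 : E) ∉ A j) :
    ∃ (a : ℕ → E) (n : ℕ → ℕ), (∀ m, a m ∈ A (n m)) ∧
      Tendsto n atTop atTop ∧ Tendsto a atTop (𝓝 0) := by
  choose u hu hu_lim using fun j => hE (A j) (hopen j) 0 (hcl j)
  have htA : ∀ j, ∃ t ∈ 𝓝 (0 : E), IsClosed t ∧ t ⊆ (u 0 j + ·) ⁻¹' A 0 := fun j =>
    exists_mem_nhds_isClosed_subset <|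
      ((hopen 0).preimage (continuous_const_add _)).mem_nhds (by simpa using hu 0 j)
  choose t ht ht_closed htA using htA
  set S : ℕ → Set E := fun j => (· - u 0 j) ⁻¹' (A j ∩ interior (t j)) with hS
  have hS_open : IsOpen (⋃ j, S j) := isOpen_iUnion fun j =>
    ((hopen j).inter isOpen_interior).preimage (continuous_sub_right _)
  have hS_cl : (0 : E) ∈ closure (⋃ j, S j) := by
    refine mem_closure_iff.2 fun O hO hO0 => ?_
    obtain ⟨W, hW, hW0, hWW⟩ := exists_open_nhds_zero_add_subset (hO.mem_nhds hO0)
    obtain ⟨j, hj⟩ := ((hu_lim 0).eventually_mem (hW.mem_nhds hW0)).exists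
    obtain ⟨k, hkW, hkt⟩ := ((hu_lim j).eventually_mem (hW.mem_nhds hW0)).and
      ((hu_lim j).eventually_mem (interior_mem_nhds.2 (ht j))) |>.exists
    refine ⟨u 0 j + u j k, hWW (Set.add_mem_add hj hkW), Set.mem_iUnion.2 ⟨j, ?_⟩⟩
    simpa [hS] using ⟨hu j k, hkt⟩
  have hS_far : ∀ j, (0 : E) ∉ closure (S j) := by
    intro j h0S
    have hsub : closure (S j) ⊆ (· - u 0 j) ⁻¹' t j :=
      closure_minimal (fun z hz => interior_subset (s := t j) hz.2)
        ((ht_closed j).preimage (continuous_sub_right _))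
    exact h0 0 (by simpa using htA j (hsub h0S))
  obtain ⟨s, hs, hs_lim⟩ := hE _ hS_open 0 hS_cl
  choose n hn using fun i => Set.mem_iUnion.1 (hs i)
  have hn_top : Tendsto n atTop atTop :=
    tendsto_atTop_of_mem_of_notMem_closure hs_lim hn hS_far
  refine ⟨fun i => s i - u 0 (n i), n, fun i => (hn i).1, hn_top, ?_⟩
  simpa using hs_lim.sub ((hu_lim 0).comp hn_top)

theorem exists_tendsto_zero_mem_of_antitone (hE : KappaFrechetUrysohn E)
    {A : ℕ → Set E} (hopen : ∀ j, IsOpen (A j)) (hA : Antitone A)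
    (hcl : ∀ j, (0 : E) ∈ closure (A j)) :
    ∃ (a : ℕ → E) (n : ℕ → ℕ), (∀ m, a m ∈ A (n m)) ∧
      Tendsto n atTop atTop ∧ Tendsto a atTop (𝓝 0) := by
  by_cases h : ∀ j, (0 : E) ∈ A j
  · exact ⟨fun _ => 0, id, h, tendsto_id, tendsto_const_nhds⟩
  obtain ⟨j₀, hj₀⟩ := not_forall.1 h
  obtain ⟨a, n, ha, hn, ha_lim⟩ := hE.exists_tendsto_zero_mem_of_zero_notMem
    (A := fun j => A (j + j₀)) (fun j => hopen _) (fun j => hcl _)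
    (fun j hj => hj₀ (hA (Nat.le_add_left j₀ j) hj))
  exact ⟨a, fun m => n m + j₀, ha,
    tendsto_atTop_mono (fun m => Nat.le_add_right _ _) hn, ha_lim⟩

theorem prod {F : Type*} [TopologicalSpace F] [FirstCountableTopology F]
    (hE : KappaFrechetUrysohn E) : KappaFrechetUrysohn (E × F) := by
  rintro U hU ⟨x, y⟩ hxy
  obtain ⟨V, hV⟩ := (𝓝 y).exists_antitone_basis
  set A : ℕ → Set E := fun j => ⋃ f ∈ V j, {e | (x + e, f) ∈ U}
  have hA_open : ∀ j, IsOpen (A j) := fun j => isOpen_biUnion fun f _ =>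
    hU.preimage ((continuous_const_add x).prodMk continuous_const)
  have hA_anti : Antitone A := fun i j hij =>
    Set.biUnion_subset_biUnion_left (hV.antitone hij)
  have hA_cl : ∀ j, (0 : E) ∈ closure (A j) := by
    refine fun j => mem_closure_iff_nhds.2 fun O hO => ?_
    have hW : ((· - x) ⁻¹' O) ×ˢ V j ∈ 𝓝 (x, y) :=
      prod_mem_nhds ((continuous_sub_right x).continuousAt.preimage_mem_nhds
        (by simpa using hO)) (hV.mem j)
    obtain ⟨z, ⟨hzO, hzV⟩, hzU⟩ := mem_closure_iff_nhds.1 hxy _ hW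
    exact ⟨z.1 - x, hzO, Set.mem_biUnion hzV (by simpa using hzU)⟩
  obtain ⟨a, n, ha, hn, ha_lim⟩ := hE.exists_tendsto_zero_mem_of_antitone hA_open hA_anti hA_cl
  choose f hfV hfU using fun m => Set.mem_iUnion₂.1 (ha m)
  have hf_lim : Tendsto f atTop (𝓝 y) :=
    hV.1.tendsto_right_iff.2 fun j _ =>
      (tendsto_atTop.1 hn j).mono fun m hm => hV.antitone hm (hfV m)
  refine ⟨fun m => (x + a m, f m), hfU, ?_⟩
  simpa using (tendsto_const_nhds.add ha_lim).prodMk_nhds hf_lim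

end KappaFrechetUrysohn

theorem stmt9_general {E F : Type*}
    [AddCommGroup E] [TopologicalSpace E] [IsTopologicalAddGroup E]
    [TopologicalSpace F] [TopologicalSpace.MetrizableSpace F]
    (hE : KappaFrechetUrysohn E) :
    KappaFrechetUrysohn (E × F) :=
  hE.prod

theorem stmt9 {E F : Type*}
    [AddCommGroup E] [Module ℝ E] [TopologicalSpace E] [IsTopologicalAddGroup E]
    [ContinuousSMul ℝ E]
    [AddCommGroup F] [Module ℝ F] [TopologicalSpace F] [IsTopologicalAddGroup F]
    [ContinuousSMul ℝ F] [TopologicalSpace.MetrizableSpace F]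
    (hE : KappaFrechetUrysohn E) :
    KappaFrechetUrysohn (E × F) :=
  stmt9_general hE
end

section
/- Every zero-dimensional Lindelöf regular topological space is strongly zero-dimensional: for any two disjoint closed sets A and B, there exists a clopen set C with A ⊆ C and C ∩ B = ∅. -/
def ZeroDimensional (X : Type*) [TopologicalSpace X] : Prop :=
  ∀ (x : X) (U : Set X), IsOpen U → x ∈ U → ∃ C : Set X, IsClopen C ∧ x ∈ C ∧ C ⊆ U

/-! By zero-dimensionality every point has a clopen neighbourhood missing `A` or missing `B`.
Countably many of them, `W₀, W₁, …`, cover `X`, and the sets `Wₙ \ (W₀ ∪ ⋯ ∪ Wₙ₋₁)` then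
partition `X` into clopen pieces. The union of the pieces missing `B` contains `A`, and it is
closed because its complement is the union of the other pieces. -/

open Set Function

section

variable {X ι : Type*} [TopologicalSpace X]

protected theorem IsClopen.disjointed [Preorder ι] [LocallyFiniteOrderBot ι] {f : ι → Set X}
    (hf : ∀ i, IsClopen (f i)) (i : ι) : IsClopen (disjointed f i) := by
  rw [disjointed_eq_inter_compl]
  exact (hf i).inter <| (finite_Iio i).isClopen_biInter fun j _ => (hf j).compl

theorem isClopen_biUnion_of_pairwise_disjoint_open_cover {D : ι → Set X}
    (hD : ∀ i, IsOpen (D i)) (hdisj : Pairwise (Disjoint on D)) (hcov : ⋃ i, D i = univ)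
    (S : Set ι) : IsClopen (⋃ i ∈ S, D i) := by
  have hcompl : (⋃ i ∈ S, D i)ᶜ = ⋃ i ∈ Sᶜ, D i := by
    refine IsCompl.compl_eq ⟨?_, ?_⟩
    · simp only [disjoint_iUnion_left, disjoint_iUnion_right]
      exact fun i hi j hj => hdisj (ne_of_mem_of_not_mem hj hi)
    · rw [codisjoint_iff]
      change (⋃ i ∈ S, D i) ∪ ⋃ i ∈ Sᶜ, D i = univ
      rw [← biUnion_union, union_compl_self, biUnion_univ, hcov]
  refine ⟨?_, isOpen_biUnion fun i _ => hD i⟩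
  rw [← isOpen_compl_iff, hcompl]
  exact isOpen_biUnion fun i _ => hD i

theorem ZeroDimensional.exists_isClopen_mem_disjoint (hX : ZeroDimensional X) {F : Set X}
    (hF : IsClosed F) {x : X} (hx : x ∉ F) : ∃ C : Set X, IsClopen C ∧ x ∈ C ∧ Disjoint C F := by
  obtain ⟨C, hC, hxC, hCF⟩ := hX x Fᶜ hF.isOpen_compl hx
  exact ⟨C, hC, hxC, subset_compl_iff_disjoint_right.mp hCF⟩

theorem LindelofSpace.exists_pairwise_disjoint_clopen_refinement [LindelofSpace X] [Nonempty ι]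
    {W : ι → Set X} (hW : ∀ i, IsClopen (W i)) (hcov : ⋃ i, W i = univ) :
    ∃ D : ℕ → Set X, (∀ n, IsClopen (D n)) ∧ Pairwise (Disjoint on D) ∧ ⋃ n, D n = univ ∧
      ∀ n, ∃ i, D n ⊆ W i := by
  obtain ⟨f, hf⟩ := isLindelof_univ.indexed_countable_subcover W (fun i => (hW i).isOpen) hcov.ge
  refine ⟨disjointed (W ∘ f), IsClopen.disjointed fun n => hW (f n), disjoint_disjointed _,
    ?_, fun n => ⟨f n, disjointed_subset _ n⟩⟩
  rw [iUnion_disjointed]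
  exact univ_subset_iff.mp hf

end

theorem stmt14_general {X : Type*} [TopologicalSpace X] [LindelofSpace X]
    (hzd : ZeroDimensional X)
    (A B : Set X) (hA : IsClosed A) (hB : IsClosed B) (hAB : Disjoint A B) :
    ∃ C : Set X, IsClopen C ∧ A ⊆ C ∧ C ∩ B = ∅ := by
  rcases isEmpty_or_nonempty X with hX | hX
  · exact ⟨∅, isClopen_empty, fun x => isEmptyElim x, empty_inter B⟩
  have hlocal : ∀ x : X, ∃ W : Set X, IsClopen W ∧ x ∈ W ∧ (Disjoint W B ∨ Disjoint W A) := by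
    intro x
    by_cases hxB : x ∈ B
    · obtain ⟨W, hW, hxW, hWA⟩ := hzd.exists_isClopen_mem_disjoint hA (hAB.notMem_of_mem_right hxB)
      exact ⟨W, hW, hxW, .inr hWA⟩
    · obtain ⟨W, hW, hxW, hWB⟩ := hzd.exists_isClopen_mem_disjoint hB hxB
      exact ⟨W, hW, hxW, .inl hWB⟩
  choose W hW hxW hWAB using hlocal
  obtain ⟨D, hD, hdisj, hcov, hDW⟩ :=
    LindelofSpace.exists_pairwise_disjoint_clopen_refinement hW
      (eq_univ_of_forall fun x => mem_iUnion.mpr ⟨x, hxW x⟩)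
  refine ⟨⋃ n ∈ {n | Disjoint (D n) B}, D n,
    isClopen_biUnion_of_pairwise_disjoint_open_cover (fun n => (hD n).isOpen) hdisj hcov _,
    fun x hxA => ?_, ?_⟩
  · obtain ⟨n, hxn⟩ := mem_iUnion.mp (hcov.ge (mem_univ x))
    obtain ⟨y, hDy⟩ := hDW n
    have hDA : ¬Disjoint (D n) A := not_disjoint_iff.mpr ⟨x, hxn, hxA⟩
    have hDB : Disjoint (D n) B :=
      ((hWAB y).imp (·.mono_left hDy) (·.mono_left hDy)).resolve_right hDA
    exact mem_biUnion hDB hxn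
  · simp only [iUnion_inter, mem_ofPred_eq, iUnion_eq_empty]
    exact fun n hn => hn.inter_eq

theorem stmt14 {X : Type*} [TopologicalSpace X] [LindelofSpace X] [RegularSpace X]
    (hzd : ZeroDimensional X)
    (A B : Set X) (hA : IsClosed A) (hB : IsClosed B) (hAB : Disjoint A B) :
    ∃ C : Set X, IsClopen C ∧ A ⊆ C ∧ C ∩ B = ∅ :=
  stmt14_general hzd A B hA hB hAB
end

section
/- Let G be a topological group and let H be a dense subgroup of G such that the coset decomposition G = H ∪ (g + H) holds for some g ∈ G \ H (so H has index 2), and suppose both H and g + H, with the subspace topologies, are Fréchet–Urysohn spaces. Then G is a κ-Fréchet–Urysohn space. -/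
open Filter Topology

def FrechetUrysohn (X : Type*) [TopologicalSpace X] : Prop :=
  ∀ A : Set X, ∀ x ∈ closure A,
    ∃ u : ℕ → X, (∀ n, u n ∈ A) ∧ Tendsto u atTop (𝓝 x)

/- A point of a dense subspace `D` in the closure of an open set `U` lies in the closure of
`U ∩ D`, so a sequence in `U ∩ D` converging to it exists inside `D`. -/
theorem FrechetUrysohn.exists_seq_tendsto_of_isOpen {X : Type*} [TopologicalSpace X]
    {D : Set X} (hFU : FrechetUrysohn D) (hD : Dense D) {U : Set X} (hU : IsOpen U)
    {x : X} (hx : x ∈ closure U) (hxD : x ∈ D) :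
    ∃ u : ℕ → X, (∀ n, u n ∈ U) ∧ Tendsto u atTop (𝓝 x) := by
  have hx' : x ∈ closure (U ∩ D) :=
    closure_minimal (hD.open_subset_closure_inter hU) isClosed_closure hx
  have hxD' : (⟨x, hxD⟩ : D) ∈ closure (Subtype.val ⁻¹' U : Set D) := by
    rwa [closure_subtype, Subtype.image_preimage_coe, Set.inter_comm]
  obtain ⟨u, hu, hlim⟩ := hFU _ _ hxD'
  exact ⟨fun n => u n, hu, (continuous_subtype_val.tendsto _).comp hlim⟩

theorem KappaFrechetUrysohn.of_forall_mem_dense {X : Type*} [TopologicalSpace X]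
    (hcover : ∀ x : X, ∃ D : Set X, x ∈ D ∧ Dense D ∧ FrechetUrysohn D) :
    KappaFrechetUrysohn X := by
  intro U hU x hx
  obtain ⟨D, hxD, hD, hFU⟩ := hcover x
  exact hFU.exists_seq_tendsto_of_isOpen hD hU hx hxD

theorem stmt15_general {G : Type*} [AddGroup G] [TopologicalSpace G] [IsTopologicalAddGroup G]
    (H : AddSubgroup G) (hdense : Dense (H : Set G)) (g : G)
    (hcover : (Set.univ : Set G) = (H : Set G) ∪ {x | ∃ h ∈ H, x = g + h})
    (hH : FrechetUrysohn (H : Set G))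
    (hgH : FrechetUrysohn ({x | ∃ h ∈ H, x = g + h} : Set G)) :
    KappaFrechetUrysohn G := by
  have hcoset : {x | ∃ h ∈ H, x = g + h} = (fun x => -g + x) ⁻¹' (H : Set G) := by
    ext x
    exact ⟨fun ⟨h, hh, hx⟩ => by simpa [hx] using hh, fun hx => ⟨-g + x, hx, by simp⟩⟩
  have hcoset_dense : Dense {x | ∃ h ∈ H, x = g + h} := by
    rw [hcoset]
    exact hdense.preimage (Homeomorph.addLeft (-g)).isOpenMap
  refine KappaFrechetUrysohn.of_forall_mem_dense fun x => ?_
  rcases (hcover ▸ Set.mem_univ x : x ∈ _) with hxH | hxgH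
  · exact ⟨_, hxH, hdense, hH⟩
  · exact ⟨_, hxgH, hcoset_dense, hgH⟩

theorem stmt15 {G : Type*} [AddGroup G] [TopologicalSpace G] [IsTopologicalAddGroup G]
    (H : AddSubgroup G) (hdense : Dense (H : Set G)) (g : G) (hg : g ∉ H)
    (hcover : (Set.univ : Set G) = (H : Set G) ∪ {x | ∃ h ∈ H, x = g + h})
    (hH : FrechetUrysohn (H : Set G))
    (hgH : FrechetUrysohn ({x | ∃ h ∈ H, x = g + h} : Set G)) :
    KappaFrechetUrysohn G :=
  stmt15_general H hdense g hcover hH hgH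
end
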